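/- Let X, Y be nonempty finite subsets of ℝ³ with distinct elements, and R : ℝ³ → ℝ³. Define the multiset S = {y - R x : x ∈ X, y ∈ Y} (with multiplicity) and let t* be a mode of S. If additionally for every t, each x ∈ X has at most one y ∈ Y with y - R x = t, then t* is a global minimizer over t ∈ ℝ³ of ∑_{x ∈ X} min_{y ∈ Y} L(t,x,y), where L(t,x,y) = 0 if y - R x = t and 1 otherwise. -/
import Mathlib

lemma inf'_ite {α : Type*} (Y : Finset α) (hY : Y.Nonempty) (P : α → Prop) [DecidablePred P] :
    Y.inf' hY (fun y => if P y then (0 : ℕ) else 1) = if ∃ y ∈ Y, P y then 0 else 1 := by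
  split
  · next h =>
    obtain ⟨y, hy, hp⟩ := h
    exact le_antisymm (le_trans (Finset.inf'_le _ hy) (by simp [hp])) (Nat.zero_le _)
  · next h =>
    push_neg at h
    obtain ⟨y, hy⟩ := id hY
    exact le_antisymm (le_trans (Finset.inf'_le _ hy) (by simp [h y hy]))
      (Finset.le_inf' _ _ fun z hz => by simp [h z hz])

lemma count_eq (X Y : Finset (Fin 3 → ℝ)) (R : (Fin 3 → ℝ) → (Fin 3 → ℝ))
    (t : Fin 3 → ℝ)
    (huniq : ∀ x ∈ X, ∀ y₁ ∈ Y, ∀ y₂ ∈ Y, y₁ - R x = t → y₂ - R x = t → y₁ = y₂) :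
    ((X ×ˢ Y).val.map (fun p => p.2 - R p.1)).count t
      = (X.filter (fun x => ∃ y ∈ Y, y - R x = t)).card := by
  rw [Multiset.count_map]
  have : Multiset.filter (fun a => t = a.2 - R a.1) (X ×ˢ Y).val
      = ((X ×ˢ Y).filter (fun a => t = a.2 - R a.1)).val := rfl
  rw [this]
  change ((X ×ˢ Y).filter (fun a => t = a.2 - R a.1)).card = _
  apply Finset.card_bij (fun p _ => p.1)
  · intro p hp
    simp only [Finset.mem_filter, Finset.mem_product] at hp
    simp only [Finset.mem_filter]
    exact ⟨hp.1.1, p.2, hp.1.2, hp.2.symm⟩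
  · intro p hp q hq h
    simp only [Finset.mem_filter, Finset.mem_product] at hp hq
    have hq2 : q.2 - R p.1 = t := by rw [h]; exact hq.2.symm
    have := huniq p.1 hp.1.1 p.2 hp.1.2 q.2 hq.1.2 hp.2.symm hq2
    exact Prod.ext h this
  · intro x hx
    simp only [Finset.mem_filter] at hx
    obtain ⟨hxX, y, hy, hyt⟩ := hx
    exact ⟨(x, y), by simp [Finset.mem_filter, Finset.mem_product, hxX, hy, hyt.symm], rfl⟩

/-- Lemma 2: the mode of the multiset of pairwise translations
`{y - R x}` globally minimizes the saturated-L₀ objective. -/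
theorem dses_stmt5
    (X Y : Finset (Fin 3 → ℝ)) (hX : X.Nonempty) (hY : Y.Nonempty)
    (R : (Fin 3 → ℝ) → (Fin 3 → ℝ))
    (S : Multiset (Fin 3 → ℝ))
    (hS : S = (X ×ˢ Y).val.map (fun p => p.2 - R p.1))
    (tstar : Fin 3 → ℝ) (hmem : tstar ∈ S)
    (hmode : ∀ s ∈ S, S.count s ≤ S.count tstar)
    (huniq : ∀ t : Fin 3 → ℝ, ∀ x ∈ X, ∀ y₁ ∈ Y, ∀ y₂ ∈ Y,
      y₁ - R x = t → y₂ - R x = t → y₁ = y₂) :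
    ∀ t : Fin 3 → ℝ,
      ∑ x ∈ X, Y.inf' hY (fun y => if y - R x = tstar then (0 : ℕ) else 1)
        ≤ ∑ x ∈ X, Y.inf' hY (fun y => if y - R x = t then (0 : ℕ) else 1) := by
  intro t
  -- rewrite sums
  have hsum : ∀ u : Fin 3 → ℝ,
      ∑ x ∈ X, Y.inf' hY (fun y => if y - R x = u then (0 : ℕ) else 1)
        = (X.filter (fun x => ¬ ∃ y ∈ Y, y - R x = u)).card := by
    intro u
    have : ∀ x ∈ X, Y.inf' hY (fun y => if y - R x = u then (0 : ℕ) else 1)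
        = if ∃ y ∈ Y, y - R x = u then 0 else 1 := fun x _ => inf'_ite Y hY _
    rw [Finset.sum_congr rfl this, Finset.sum_ite, Finset.sum_const, Finset.sum_const]
    simp [Finset.filter_not]
  have hcard : ∀ u : Fin 3 → ℝ,
      (X.filter (fun x => ∃ y ∈ Y, y - R x = u)).card
        + (X.filter (fun x => ¬ ∃ y ∈ Y, y - R x = u)).card = X.card := fun u =>
    Finset.card_filter_add_card_filter_not _
  -- key counting
  have hct : ∀ u : Fin 3 → ℝ, S.count u = (X.filter (fun x => ∃ y ∈ Y, y - R x = u)).card := by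
    intro u
    rw [hS]
    exact count_eq X Y R u (huniq u)
  -- f t ≤ f tstar
  have hkey : (X.filter (fun x => ∃ y ∈ Y, y - R x = t)).card
      ≤ (X.filter (fun x => ∃ y ∈ Y, y - R x = tstar)).card := by
    rw [← hct, ← hct]
    by_cases ht : t ∈ S
    · exact hmode t ht
    · rw [Multiset.count_eq_zero_of_notMem ht]; exact Nat.zero_le _
  rw [hsum, hsum]
  have h1 := hcard t
  have h2 := hcard tstar
  omega
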